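/- arXiv:1709.05263 — 9 statements merged into one kernel-verified Lean document; each statement's English description precedes it below -/
import Mathlib

section
/- Let n, m be natural numbers with n ≥ 2, let f : Fin n → Fin m, and suppose there exist indices i ≠ j with f i = f j. Then every function h : Fin n → Fin m that is exp-adjacent to f satisfies f i ∉ Set.range h, and consequently h is also exp-adjacent to the constant function with value f i. (In other words, in the exponential graph K_m^{K_n} the neighborhood of a non-injective map f is contained in the neighborhood of the constant map at the repeated value, which is the fold used to reduce K_m^{K_n} to the subgraph of injective and constant maps.) -/
/-- `f` and `g` are adjacent in the exponential graph `K_m^{K_n}`: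
for all `i ≠ j`, `f i ≠ g j`. -/
def ExpAdj {n m : ℕ} (f g : Fin n → Fin m) : Prop :=
  ∀ ⦃i j : Fin n⦄, i ≠ j → f i ≠ g j

namespace ExpAdj

variable {n m : ℕ} {f h : Fin n → Fin m}

theorem apply_ne_of_apply_eq (hadj : ExpAdj h f) {i j : Fin n} (hij : i ≠ j) (hf : f i = f j)
    (k : Fin n) : h k ≠ f i := by
  by_cases hk : k = i
  · subst hk
    exact hf ▸ hadj hij
  · exact hadj hk

theorem const_of_forall_ne {x : Fin m} (hx : ∀ k, h k ≠ x) : ExpAdj h (fun _ => x) :=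
  fun k _ _ => hx k

end ExpAdj

theorem stmt_0_general (n m : ℕ) (f : Fin n → Fin m)
    (i j : Fin n) (hij : i ≠ j) (hf : f i = f j)
    (h : Fin n → Fin m) (hadj : ExpAdj h f) :
    f i ∉ Set.range h ∧ ExpAdj h (fun _ => f i) := by
  have avoids := hadj.apply_ne_of_apply_eq hij hf
  exact ⟨fun ⟨k, hk⟩ => avoids k hk, ExpAdj.const_of_forall_ne avoids⟩

theorem stmt_0 (n m : ℕ) (hn : 2 ≤ n) (f : Fin n → Fin m)
    (i j : Fin n) (hij : i ≠ j) (hf : f i = f j)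
    (h : Fin n → Fin m) (hadj : ExpAdj h f) :
    f i ∉ Set.range h ∧ ExpAdj h (fun _ => f i) :=
  stmt_0_general n m f i j hij hf h hadj
end

section
/- Let n ≥ 2, let f : Fin n → Fin (n+1) be injective, and let x : Fin (n+1) be the element with x ∉ Set.range f. Let g : Fin n → Fin (n+1) be either injective or constant. Then g is exp-adjacent to f if and only if g = f, or g = const x, or g = Function.update f k x for some k : Fin n. (This identifies the neighborhood of an injective vertex f in the folded exponential graph G as {f, <x>, f_1, …, f_n}.) -/
open Function

theorem Set.range_eq_compl_singleton_of_card_eq_succ {α β : Type*} [Fintype α] [Fintype β]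
    (hcard : Fintype.card β = Fintype.card α + 1) {f : α → β} (hf : Injective f) {x : β}
    (hx : x ∉ Set.range f) : Set.range f = {x}ᶜ := by
  classical
  refine Set.eq_of_subset_of_ncard_le (fun y hy hyx => hx (hyx ▸ hy)) ?_ (Set.toFinite _)
  rw [Set.ncard_range_of_injective hf, Set.ncard_eq_toFinset_card', Set.toFinset_compl,
    Finset.card_compl, Set.toFinset_singleton, Finset.card_singleton, Nat.card_eq_fintype_card]
  omega

namespace ExpAdj

variable {n m : ℕ} {f g : Fin n → Fin m}

theorem eq_of_apply_eq_apply (h : ExpAdj g f) {i j : Fin n} (hij : g i = f j) : i = j :=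
  not_not.mp fun hne => h hne hij

theorem apply_eq_or_notMem_range (h : ExpAdj g f) (i : Fin n) :
    g i = f i ∨ g i ∉ Set.range f := by
  refine or_iff_not_imp_right.mpr fun hi => ?_
  obtain ⟨j, hj⟩ := not_not.mp hi
  rw [← hj, h.eq_of_apply_eq_apply hj.symm]

end ExpAdj

theorem expAdj_iff_forall_eq_or_notMem_range {n m : ℕ} {f g : Fin n → Fin m}
    (hf : Injective f) : ExpAdj g f ↔ ∀ i, g i = f i ∨ g i ∉ Set.range f := by
  refine ⟨ExpAdj.apply_eq_or_notMem_range, fun h i j hij hg => ?_⟩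
  rcases h i with hi | hi
  · exact hij (hf (hi.symm.trans hg))
  · exact hi ⟨j, hg.symm⟩

theorem eq_or_exists_eq_update_of_injective {α β : Type*} [DecidableEq α] {f g : α → β} {x : β}
    (hg : Injective g) (h : ∀ i, g i = f i ∨ g i = x) : g = f ∨ ∃ k, g = update f k x := by
  by_cases hgf : ∀ i, g i = f i
  · exact .inl (funext hgf)
  push Not at hgf
  obtain ⟨k, hk⟩ := hgf
  have hgk : g k = x := (h k).resolve_left hk
  refine .inr ⟨k, funext fun i => ?_⟩
  rcases eq_or_ne i k with rfl | hik
  · rw [update_self, hgk]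
  · rw [update_of_ne hik]
    exact (h i).resolve_right fun hix => hik (hg (hix.trans hgk.symm))

theorem eq_of_forall_eq_apply_or_eq {α β : Type*} [Nontrivial α] {f : α → β} (hf : Injective f)
    {c x : β} (h : ∀ i, c = f i ∨ c = x) : c = x := by
  obtain ⟨i, j, hij⟩ := exists_pair_ne α
  rcases h i with hi | hi
  · exact (h j).resolve_left fun hj => hij (hf (hi.symm.trans hj))
  · exact hi

theorem stmt_1 (n : ℕ) (hn : 2 ≤ n) (f : Fin n → Fin (n + 1))
    (hf : Function.Injective f) (x : Fin (n + 1)) (hx : x ∉ Set.range f)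
    (g : Fin n → Fin (n + 1))
    (hg : Function.Injective g ∨ ∃ c, g = fun _ => c) :
    ExpAdj g f ↔
      g = f ∨ (g = fun _ => x) ∨ ∃ k : Fin n, g = Function.update f k x := by
  have hrange : Set.range f = {x}ᶜ :=
    Set.range_eq_compl_singleton_of_card_eq_succ (by simp) hf hx
  simp only [expAdj_iff_forall_eq_or_notMem_range hf, hrange, Set.mem_compl_singleton_iff,
    not_not]
  constructor
  · intro h
    rcases hg with hg | ⟨c, rfl⟩
    · exact (eq_or_exists_eq_update_of_injective hg h).imp_right .inr
    · have : Nontrivial (Fin n) := Fin.nontrivial_iff_two_le.mpr hn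
      exact .inr (.inl (by rw [eq_of_forall_eq_apply_or_eq hf h]))
  · rintro (rfl | rfl | ⟨k, rfl⟩) i
    · exact .inl rfl
    · exact .inr rfl
    · rw [update_apply]
      split_ifs <;> simp
end

section
/- Let n ≥ 1, let f : Fin n → Fin (n+1) be injective, and let x : Fin (n+1) be the element with x ∉ Set.range f. Then an arbitrary function h : Fin n → Fin (n+1) is exp-adjacent to f if and only if for every i : Fin n, either h i = f i or h i = x. -/
open Function Set

theorem Function.Injective.eq_of_notMem_range_of_card_eq_succ {α β : Type*} [Fintype α]
    [Fintype β] {f : α → β} (hf : Injective f) (hcard : Fintype.card β = Fintype.card α + 1)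
    {x y : β} (hx : x ∉ range f) (hy : y ∉ range f) : y = x := by
  classical
  have hcompl : (Finset.univ.image f)ᶜ.card = 1 := by
    rw [Finset.card_compl, Finset.card_image_of_injective _ hf, Finset.card_univ, hcard]
    omega
  obtain ⟨z, hz⟩ := Finset.card_eq_one.mp hcompl
  have mem_compl : ∀ {w : β}, w ∉ range f → w = z := fun {w} hw ↦
    Finset.mem_singleton.mp <| hz ▸ by simpa [Finset.mem_compl] using hw
  rw [mem_compl hx, mem_compl hy]

theorem expAdj_of_forall_eq_or_eq {n m : ℕ} {f h : Fin n → Fin m} (hf : Injective f)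
    {x : Fin m} (hx : x ∉ range f) (hh : ∀ i, h i = f i ∨ h i = x) : ExpAdj h f := by
  intro i j hij
  rcases hh i with hi | hi <;> rw [hi]
  · exact hf.ne hij
  · exact fun hxj ↦ hx ⟨j, hxj.symm⟩

theorem ExpAdj.eq_or_eq_of_injective {n : ℕ} {f h : Fin n → Fin (n + 1)} (hadj : ExpAdj h f)
    (hf : Injective f) {x : Fin (n + 1)} (hx : x ∉ range f) (i : Fin n) :
    h i = f i ∨ h i = x := by
  refine or_iff_not_imp_right.mpr fun hix ↦ ?_
  obtain ⟨j, hj⟩ : h i ∈ range f := by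
    by_contra hi
    exact hix (hf.eq_of_notMem_range_of_card_eq_succ (by simp) hx hi)
  obtain rfl : i = j := by_contra fun hij ↦ hadj hij hj.symm
  exact hj.symm

theorem stmt_3_general (n : ℕ) (f : Fin n → Fin (n + 1))
    (hf : Function.Injective f) (x : Fin (n + 1)) (hx : x ∉ Set.range f)
    (h : Fin n → Fin (n + 1)) :
    ExpAdj h f ↔ ∀ i : Fin n, h i = f i ∨ h i = x :=
  ⟨fun hadj ↦ hadj.eq_or_eq_of_injective hf hx, expAdj_of_forall_eq_or_eq hf hx⟩

theorem stmt_3 (n : ℕ) (hn : 1 ≤ n) (f : Fin n → Fin (n + 1))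
    (hf : Function.Injective f) (x : Fin (n + 1)) (hx : x ∉ Set.range f)
    (h : Fin n → Fin (n + 1)) :
    ExpAdj h f ↔ ∀ i : Fin n, h i = f i ∨ h i = x :=
  stmt_3_general n f hf x hx h
end

section
/- Let n ≥ 2, let f : Fin n → Fin (n+1) be injective, let x : Fin (n+1) satisfy x ∉ Set.range f, and let s, t : Fin n with s ≠ t. If a function h : Fin n → Fin (n+1) is exp-adjacent to both Function.update f s x and Function.update f t x, then h = f. (Hence {f_s, f_t} is a free face of the maximal simplex N(f) of the neighborhood complex: N(f) is the only maximal simplex containing {f_s, f_t}.) -/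
/-!
Replacing the value of `f` at `i` by the value `x` it misses gives an injective map whose
range misses only `f i`, so it suffices to show that `h i` is not in that range either. Any
`f j` with `j ≠ i` is excluded by whichever of `update f s x`, `update f t x` keeps `f j`, and
`x` is excluded by whichever of them places `x` at a position other than `i`.
-/

open Function Set

namespace Function.Injective

variable {α β : Type*} {f : α → β}

theorem eq_of_notMem_range [Fintype α] [Fintype β] (hf : Injective f)
    (hcard : Fintype.card β ≤ Fintype.card α + 1) {a b : β} (ha : a ∉ range f)
    (hb : b ∉ range f) : a = b := by
  classical
  by_contra hab
  have hsub : Finset.univ.image f ⊆ {a, b}ᶜ := by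
    rintro _ hy
    obtain ⟨i, -, rfl⟩ := Finset.mem_image.mp hy
    simp only [Finset.mem_compl, Finset.mem_insert, Finset.mem_singleton, not_or]
    exact ⟨fun h => ha ⟨i, h⟩, fun h => hb ⟨i, h⟩⟩
  have hle := Finset.card_le_card hsub
  rw [Finset.card_image_of_injective _ hf, Finset.card_compl, Finset.card_pair hab,
    Finset.card_univ] at hle
  have : 2 ≤ Fintype.card β := by
    simpa [Finset.card_pair hab] using Finset.card_le_univ ({a, b} : Finset β)
  omega

variable [DecidableEq α] {x : β}

theorem update_of_notMem_range (hf : Injective f) (hx : x ∉ range f) (i : α) :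
    Injective (update f i x) := by
  intro a b hab
  by_contra hne
  rcases eq_or_ne a i with rfl | ha
  · rw [update_self, update_of_ne (Ne.symm hne)] at hab
    exact hx ⟨b, hab.symm⟩
  rcases eq_or_ne b i with rfl | hb
  · rw [update_self, update_of_ne ha] at hab
    exact hx ⟨a, hab⟩
  · rw [update_of_ne ha, update_of_ne hb] at hab
    exact hne (hf hab)

theorem apply_notMem_range_update (hf : Injective f) (hx : x ∉ range f) (i : α) :
    f i ∉ range (update f i x) := by
  rintro ⟨j, hj⟩
  rcases eq_or_ne j i with rfl | hji
  · rw [update_self] at hj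
    exact hx ⟨j, hj.symm⟩
  · rw [update_of_ne hji] at hj
    exact hji (hf hj)

end Function.Injective

theorem ExpAdj.apply_notMem_range_update {n m : ℕ} {f h : Fin n → Fin m} {x : Fin m}
    {s t : Fin n} (hst : s ≠ t) (hs : ExpAdj h (update f s x))
    (ht : ExpAdj h (update f t x)) (i : Fin n) : h i ∉ range (update f i x) := by
  have hne_f : ∀ j, j ≠ i → h i ≠ f j := by
    intro j hji
    rcases eq_or_ne j s with rfl | hjs
    · simpa [update_of_ne hst] using ht hji.symm
    · simpa [update_of_ne hjs] using hs hji.symm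
  have hne_x : h i ≠ x := by
    rcases eq_or_ne s i with rfl | hsi
    · simpa using ht hst
    · simpa using hs hsi.symm
  rintro ⟨j, hj⟩
  rcases eq_or_ne j i with rfl | hji
  · exact hne_x (by simpa using hj.symm)
  · exact hne_f j hji (by rw [← hj, update_of_ne hji])

theorem stmt_4_general (n : ℕ) (f : Fin n → Fin (n + 1))
    (hf : Function.Injective f) (x : Fin (n + 1)) (hx : x ∉ Set.range f)
    (s t : Fin n) (hst : s ≠ t) (h : Fin n → Fin (n + 1))
    (hs : ExpAdj h (Function.update f s x))
    (ht : ExpAdj h (Function.update f t x)) :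
    h = f := by
  funext i
  exact (hf.update_of_notMem_range hx i).eq_of_notMem_range (by simp)
    (hs.apply_notMem_range_update hst ht i) (hf.apply_notMem_range_update hx i)

theorem stmt_4 (n : ℕ) (hn : 2 ≤ n) (f : Fin n → Fin (n + 1))
    (hf : Function.Injective f) (x : Fin (n + 1)) (hx : x ∉ Set.range f)
    (s t : Fin n) (hst : s ≠ t) (h : Fin n → Fin (n + 1))
    (hs : ExpAdj h (Function.update f s x))
    (ht : ExpAdj h (Function.update f t x)) :
    h = f :=
  stmt_4_general n f hf x hx s t hst h hs ht
end

section
/- Let n ≥ 2, let f : Fin n → Fin (n+1) be injective, let x : Fin (n+1) satisfy x ∉ Set.range f, and let a ∈ Set.range f. Then there is no function h : Fin n → Fin (n+1) that is simultaneously exp-adjacent to f, to the constant function const x, and to the constant function const a. (In the neighborhood complex this says N(f, <x>, <a>) = ∅.) -/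
namespace ExpAdj

variable {n m : ℕ} {h g : Fin n → Fin m}

theorem eq_of_apply_eq (hg : ExpAdj h g) {i j : Fin n} (hij : h i = g j) : i = j :=
  not_not.mp fun hne => hg hne hij

theorem apply_ne_of_const (hn : 2 ≤ n) {c : Fin m} (hc : ExpAdj h fun _ => c) (i : Fin n) :
    h i ≠ c := by
  obtain ⟨j, hji⟩ := Fintype.exists_ne_of_one_lt_card (by simp; omega) i
  exact hc (Ne.symm hji)

end ExpAdj

theorem Function.Injective.mem_range_or_eq_of_card_eq_succ {α β : Type*} [Fintype α] [Fintype β]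
    (hcard : Fintype.card β = Fintype.card α + 1) {f : α → β} (hf : Function.Injective f)
    {x : β} (hx : x ∉ Set.range f) (y : β) : y = x ∨ y ∈ Set.range f := by
  classical
  have hx' : x ∉ Finset.univ.image f := by simpa using hx
  have hcover : insert x (Finset.univ.image f) = Finset.univ := by
    apply Finset.eq_univ_of_card
    rw [Finset.card_insert_of_notMem hx', Finset.card_image_of_injective _ hf, hcard,
      Finset.card_univ]
  have hy : y ∈ insert x (Finset.univ.image f) := hcover ▸ Finset.mem_univ y
  simpa using hy

theorem stmt_7 (n : ℕ) (hn : 2 ≤ n) (f : Fin n → Fin (n + 1))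
    (hf : Function.Injective f) (x : Fin (n + 1)) (hx : x ∉ Set.range f)
    (a : Fin (n + 1)) (ha : a ∈ Set.range f) :
    ¬ ∃ h : Fin n → Fin (n + 1),
        ExpAdj h f ∧ ExpAdj h (fun _ => x) ∧ ExpAdj h (fun _ => a) := by
  rintro ⟨h, hhf, hhx, hha⟩
  obtain ⟨k, rfl⟩ := ha
  have hk : h k = f k := by
    rcases hf.mem_range_or_eq_of_card_eq_succ (by simp) hx (h k) with hkx | ⟨j, hj⟩
    · exact absurd hkx (hhx.apply_ne_of_const hn k)
    · obtain rfl := hhf.eq_of_apply_eq hj.symm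
      exact hj.symm
  exact hha.apply_ne_of_const hn k hk
end

section
/- For every n ≥ 2 there exists a list l of permutations of Fin n such that l has no duplicates, every permutation of Fin n occurs in l (so l has length n!), and any two consecutive entries a, b of l differ by a single transposition, i.e., there exist i ≠ j in Fin n with b = a * Equiv.swap i j. (The n! elements of W_n can be ordered so that consecutive elements are related by swapping two values.) -/
/-!
Induct on the finite type through `Option`. The permutations of `Option α` fixing `none` are the
image of `Perm α` under `optionCongr`, so they carry a Gray code `L` starting at `1`; the
permutations sending `none` to `v` form the coset `s * L` for any `s` with `s none = v`, and
translates of a Gray code are Gray codes. Listing the values `v` one after another, the last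
element `e` of one coset is joined to the next coset by `e * swap (e⁻¹ v') none`, which sends
`none` to `v'`; the next translate is chosen to start there.
-/

open Equiv

namespace Equiv.Perm

variable {α β : Type*}

theorem mem_map_mul_left_iff_apply_eq {t : α} {L : List (Perm α)}
    (hmem : ∀ q, q ∈ L ↔ q t = t) (s p : Perm α) : p ∈ L.map (s * ·) ↔ p t = s t := by
  rw [List.mem_map]
  refine ⟨?_, fun hp => ⟨s⁻¹ * p, (hmem _).2 ?_, mul_inv_cancel_left s p⟩⟩
  · rintro ⟨q, hq, rfl⟩
    simp [(hmem q).1 hq]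
  · simp [hp]

variable [DecidableEq α]

def SwapAdj (a b : Perm α) : Prop :=
  ∃ i j, i ≠ j ∧ b = a * swap i j

theorem SwapAdj.mul_left {a b : Perm α} (g : Perm α) (h : SwapAdj a b) :
    SwapAdj (g * a) (g * b) := by
  obtain ⟨i, j, hij, rfl⟩ := h
  exact ⟨i, j, hij, mul_assoc g a _⟩

theorem SwapAdj.map [DecidableEq β] {a b : Perm α} (φ : Perm α → Perm β) (f : α → β)
    (hf : Function.Injective f) (hφ : ∀ a i j, φ (a * swap i j) = φ a * swap (f i) (f j))
    (h : SwapAdj a b) : SwapAdj (φ a) (φ b) := by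
  obtain ⟨i, j, hij, rfl⟩ := h
  exact ⟨f i, f j, hf.ne hij, hφ a i j⟩

structure IsTranspositionGrayCode (l : List (Perm α)) : Prop where
  nodup : l.Nodup
  mem : ∀ p, p ∈ l
  head? : l.head? = some 1
  isChain : l.IsChain SwapAdj

theorem isTranspositionGrayCode_singleton_one [Subsingleton α] :
    IsTranspositionGrayCode ([1] : List (Perm α)) :=
  ⟨List.nodup_singleton 1, fun p => by simp [Subsingleton.elim p 1], rfl,
    List.isChain_singleton 1⟩

theorem IsTranspositionGrayCode.map_permCongr [DecidableEq β] {l : List (Perm α)}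
    (hl : IsTranspositionGrayCode l) (e : α ≃ β) :
    IsTranspositionGrayCode (l.map e.permCongrHom) where
  nodup := hl.nodup.map e.permCongrHom.injective
  mem p := List.mem_map.2 ⟨e.permCongrHom.symm p, hl.mem _, e.permCongrHom.apply_symm_apply p⟩
  head? := by rw [List.head?_map, hl.head?, Option.map_some, map_one]
  isChain := by
    refine List.isChain_map_of_isChain _ (fun a b => SwapAdj.map _ e e.injective ?_) hl.isChain
    intro a i j
    rw [map_mul, permCongrHom_coe, permCongr_def e (swap i j), symm_trans_swap_trans]

theorem optionCongr_mul_swap (a : Perm α) (i j : α) :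
    optionCongr (a * swap i j) = optionCongr a * swap (some i) (some j) := by
  rw [← optionCongr_swap, Perm.mul_def, Perm.mul_def, optionCongr_trans]

theorem eq_optionCongr_removeNone {q : Perm (Option α)} (hq : q none = none) :
    q = optionCongr (removeNone q) := by
  ext x : 1
  simp [hq]

theorem exists_isChain_swapAdj_of_stabilizer {t : α} {L : List (Perm α)} (hnodup : L.Nodup)
    (hmem : ∀ q, q ∈ L ↔ q t = t) (hhead : L.head? = some 1) (hchain : L.IsChain SwapAdj) :
    ∀ (vs : List α), vs.Nodup → ∀ s : Perm α, vs.head? = some (s t) →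
      ∃ l : List (Perm α), l.Nodup ∧ (∀ p, p ∈ l ↔ p t ∈ vs) ∧ l.head? = some s ∧
        l.IsChain SwapAdj := by
  have hne : L ≠ [] := by rintro rfl; simp at hhead
  intro vs
  induction vs with
  | nil => simp
  | cons v vs ih =>
    intro hvs s hv
    obtain rfl : v = s t := by simpa using hv
    set chunk := L.map (s * ·)
    have hchunk_mem : ∀ p, p ∈ chunk ↔ p t = s t := mem_map_mul_left_iff_apply_eq hmem s
    have hchunk_nodup : chunk.Nodup := hnodup.map (mul_right_injective s)
    have hchunk_head : chunk.head? = some s := by simp [chunk, hhead]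
    have hchunk_chain : chunk.IsChain SwapAdj :=
      List.isChain_map_of_isChain (s * ·) (fun _ _ => SwapAdj.mul_left s) hchain
    cases vs with
    | nil => exact ⟨chunk, hchunk_nodup, by simpa using hchunk_mem, hchunk_head, hchunk_chain⟩
    | cons v' vs =>
      set e := s * L.getLast hne
      have he : e t = s t := by simp [e, (hmem _).1 (L.getLast_mem hne)]
      have hv' : v' ≠ s t := by
        rintro rfl
        exact (List.nodup_cons.1 hvs).1 List.mem_cons_self
      have hnext : (e * swap (e⁻¹ v') t) t = v' := by simp
      obtain ⟨l', hl'nodup, hl'mem, hl'head, hl'chain⟩ :=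
        ih hvs.of_cons (e * swap (e⁻¹ v') t) (by rw [hnext]; rfl)
      refine ⟨chunk ++ l', ?_, fun p => ?_, ?_, ?_⟩
      · refine hchunk_nodup.append hl'nodup fun p hp hp' => ?_
        exact (List.nodup_cons.1 hvs).1 ((hchunk_mem p).1 hp ▸ (hl'mem p).1 hp')
      · simp [hchunk_mem, hl'mem]
      · rw [List.head?_append_of_ne_nil _ (by rintro h; simp [h] at hchunk_head), hchunk_head]
      · refine hchunk_chain.append hl'chain fun x hx y hy => ?_
        have hx : x = e := by simpa [chunk, List.getLast?_eq_some_getLast hne] using hx.symm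
        have hy : y = e * swap (e⁻¹ v') t := by simpa [hl'head] using hy.symm
        refine ⟨e⁻¹ v', t, fun h => hv' ?_, hx ▸ hy⟩
        rw [← he, ← h, coe_inv, apply_symm_apply]

theorem IsTranspositionGrayCode.exists_option [Fintype α] {l : List (Perm α)}
    (hl : IsTranspositionGrayCode l) :
    ∃ l' : List (Perm (Option α)), IsTranspositionGrayCode l' := by
  have hmem : ∀ q, q ∈ l.map optionCongr ↔ q none = none := by
    refine fun q => ⟨?_, fun hq => List.mem_map.2 ⟨removeNone q, hl.mem _, ?_⟩⟩
    · intro hq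
      obtain ⟨p, -, rfl⟩ := List.mem_map.1 hq
      rfl
    · exact (eq_optionCongr_removeNone hq).symm
  have hchain : (l.map optionCongr).IsChain SwapAdj :=
    List.isChain_map_of_isChain optionCongr
      (fun _ _ => SwapAdj.map optionCongr some (Option.some_injective α) optionCongr_mul_swap)
      hl.isChain
  obtain ⟨l', hnodup, hmem', hhead, hchain'⟩ :=
    exists_isChain_swapAdj_of_stabilizer (hl.nodup.map optionCongr_injective) hmem
      (by simp [hl.head?]) hchain (none :: Finset.univ.toList.map some)
      (List.nodup_cons.2 ⟨by simp, Finset.univ.nodup_toList.map (Option.some_injective α)⟩)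
      1 rfl
  refine ⟨l', hnodup, fun p => (hmem' p).2 ?_, hhead, hchain'⟩
  cases p none <;> simp

theorem exists_isTranspositionGrayCode (α : Type*) [Finite α] [DecidableEq α] :
    ∃ l : List (Perm α), IsTranspositionGrayCode l := by
  refine Finite.induction_empty_option
    (P := fun β => ∀ [DecidableEq β], ∃ l : List (Perm β), IsTranspositionGrayCode l)
    ?_ ?_ ?_ α
  · intro α β e h _
    let := e.decidableEq
    obtain ⟨l, hl⟩ := h
    exact ⟨_, hl.map_permCongr e⟩
  · intro _
    exact ⟨_, isTranspositionGrayCode_singleton_one⟩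
  · intro α _ h inst
    classical
    obtain rfl : inst = Option.instDecidableEq := Subsingleton.elim _ _
    obtain ⟨l, hl⟩ := h
    exact hl.exists_option

end Equiv.Perm

theorem stmt_9_general (n : ℕ) :
    ∃ l : List (Equiv.Perm (Fin n)),
      l.Nodup ∧ (∀ p : Equiv.Perm (Fin n), p ∈ l) ∧
        l.length = Nat.factorial n ∧
        ∀ (k : ℕ) (h1 : k < l.length) (h2 : k + 1 < l.length),
          ∃ i j : Fin n, i ≠ j ∧
            l.get ⟨k + 1, h2⟩ = l.get ⟨k, h1⟩ * Equiv.swap i j := by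
  obtain ⟨l, hl⟩ := Perm.exists_isTranspositionGrayCode (Fin n)
  refine ⟨l, hl.nodup, hl.mem, ?_, fun k _ h2 => List.isChain_iff_getElem.1 hl.isChain k h2⟩
  simpa [Fintype.card_perm] using Fintype.card_congr (hl.nodup.getEquivOfForallMemList l hl.mem)

theorem stmt_9 (n : ℕ) (hn : 2 ≤ n) :
    ∃ l : List (Equiv.Perm (Fin n)),
      l.Nodup ∧ (∀ p : Equiv.Perm (Fin n), p ∈ l) ∧
        l.length = Nat.factorial n ∧
        ∀ (k : ℕ) (h1 : k < l.length) (h2 : k + 1 < l.length),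
          ∃ i j : Fin n, i ≠ j ∧
            l.get ⟨k + 1, h2⟩ = l.get ⟨k, h1⟩ * Equiv.swap i j :=
  stmt_9_general n
end

section
/- For n ≥ 2, the simple graph whose vertex set is the set of all functions Fin n → Fin (n+1), and in which two distinct functions f and g are adjacent if and only if they are exp-adjacent (i.e., f i ≠ g j for all i ≠ j), is connected. (This is the connectivity of the exponential graph K_{n+1}^{K_n}, giving H_0(N(K_{n+1}^{K_n}); ℤ₂) ≅ ℤ₂.) -/
/-- The simple graph on all functions `Fin n → Fin m` associated to the
exponential graph `K_m^{K_n}`: two distinct functions are adjacent iff they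
are exp-adjacent. -/
def expGraph (n m : ℕ) : SimpleGraph (Fin n → Fin m) where
  Adj f g := f ≠ g ∧ ExpAdj f g
  symm := ⟨by
    rintro f g ⟨hne, hadj⟩
    exact ⟨hne.symm, fun i j hij => (hadj hij.symm).symm⟩⟩
  loopless := ⟨fun f hf => hf.1 rfl⟩

/-! Every function `Fin n → Fin m` with `n < m` misses some value `c`, and is then adjacent
(or equal) to the constant function `c`; distinct constant functions are adjacent to each other. -/

namespace expGraph

variable {n m : ℕ}

theorem expAdj_const_of_forall_ne {f : Fin n → Fin m} {c : Fin m} (hf : ∀ i, f i ≠ c) :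
    ExpAdj f (fun _ => c) :=
  fun i _ _ => hf i

theorem expAdj_const_const {c d : Fin m} (hcd : c ≠ d) :
    ExpAdj (n := n) (fun _ => c) (fun _ => d) :=
  fun _ _ _ => hcd

theorem reachable_of_expAdj {f g : Fin n → Fin m} (h : ExpAdj f g) :
    (expGraph n m).Reachable f g := by
  by_cases hfg : f = g
  · exact hfg ▸ SimpleGraph.Reachable.refl f
  · exact SimpleGraph.Adj.reachable ⟨hfg, h⟩

theorem exists_forall_ne_of_lt (hnm : n < m) (f : Fin n → Fin m) : ∃ c, ∀ i, f i ≠ c := by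
  have hf : ¬ Function.Surjective f := fun hsurj => by
    have hcard := Fintype.card_le_of_surjective f hsurj
    simp only [Fintype.card_fin] at hcard
    omega
  simpa [Function.Surjective] using hf

theorem connected_of_lt (hnm : n < m) : (expGraph n m).Connected := by
  have : Nonempty (Fin n → Fin m) := ⟨fun _ => ⟨0, by omega⟩⟩
  refine ⟨fun f g => ?_⟩
  obtain ⟨c, hc⟩ := exists_forall_ne_of_lt hnm f
  obtain ⟨d, hd⟩ := exists_forall_ne_of_lt hnm g
  have hcd : (expGraph n m).Reachable (fun _ => c) (fun _ => d) := by
    by_cases h : c = d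
    · exact h ▸ SimpleGraph.Reachable.refl _
    · exact reachable_of_expAdj (expAdj_const_const h)
  exact (reachable_of_expAdj (expAdj_const_of_forall_ne hc)).trans
    (hcd.trans (reachable_of_expAdj (expAdj_const_of_forall_ne hd)).symm)

end expGraph

theorem stmt_11_general (n : ℕ) : (expGraph n (n + 1)).Connected :=
  expGraph.connected_of_lt n.lt_succ_self

theorem stmt_11 (n : ℕ) (hn : 2 ≤ n) : (expGraph n (n + 1)).Connected :=
  stmt_11_general n
end

section
/- Let n ≥ 2 and m ≥ 1, and let S : Finset (Fin m). Then there exists a function h : Fin n → Fin m that is exp-adjacent to the constant function const x for every x ∈ S if and only if S ≠ Finset.univ. (Hence the simplices of the neighborhood complex of K_m^{K_n} spanned by constant maps are exactly the proper subsets of the m constants, i.e., the boundary of the (m−1)-simplex, which underlies N(K_m^{K_n}) ≃ S^{m−2} for m < n.) -/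
theorem ExpAdj.apply_ne_of_const_s14 {n m : ℕ} (hn : 2 ≤ n) {h : Fin n → Fin m} {x : Fin m}
    (hadj : ExpAdj h (fun _ => x)) (i : Fin n) : h i ≠ x :=
  have : Nontrivial (Fin n) := Fin.nontrivial_iff_two_le.mpr hn
  let ⟨_, hj⟩ := exists_ne i
  hadj hj.symm

theorem expAdj_const_const {n m : ℕ} {x y : Fin m} (hxy : y ≠ x) :
    ExpAdj (fun _ : Fin n => y) (fun _ => x) :=
  fun _ _ _ => hxy

theorem stmt_14_general (n m : ℕ) (hn : 2 ≤ n) (S : Finset (Fin m)) :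
    (∃ h : Fin n → Fin m, ∀ x ∈ S, ExpAdj h (fun _ => x)) ↔
      S ≠ Finset.univ := by
  constructor
  · rintro ⟨h, hadj⟩ rfl
    exact (hadj _ (Finset.mem_univ _)).apply_ne_of_const_s14 hn ⟨0, by omega⟩ rfl
  · intro hS
    obtain ⟨y, hy⟩ : ∃ y, y ∉ S := by simpa [Finset.eq_univ_iff_forall] using hS
    exact ⟨fun _ => y, fun x hx => expAdj_const_const (ne_of_mem_of_not_mem hx hy).symm⟩

theorem stmt_14 (n m : ℕ) (hn : 2 ≤ n) (hm : 1 ≤ m) (S : Finset (Fin m)) :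
    (∃ h : Fin n → Fin m, ∀ x ∈ S, ExpAdj h (fun _ => x)) ↔
      S ≠ Finset.univ :=
  stmt_14_general n m hn S
end

section
/- Let n ≥ 2. The number of pairs (f, i), where f : Fin n → Fin (n+1) is injective, i : Fin n, and the unique element c of Fin (n+1) with c ∉ Set.range f satisfies c ≠ 0 and c < f i, equals n! · n · (n−1) / 2. (This is the count |C₂| = n!·n(n−1)/2 of critical 2-cells in the discrete Morse matching, where the element 0 plays the role of the distinguished color 1.) -/
/-!
The missing value `c` of an injective `f : Fin n → Fin (n + 1)` is unique, so the pairs `(f, i)`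
split according to `c`. For fixed `c`, the maps avoiding `c` are the `n!` bijections onto `{c}ᶜ`,
and each of them matches the admissible `i` with the values `v > c`. Summing `n! · (n - c)` over
`c = 1, …, n` gives `n! · n(n - 1)/2`.
-/

open Finset Function

theorem Nat.card_subtype_exists {ι γ : Type*} [Fintype ι] [Finite γ] (P : ι → γ → Prop)
    (hP : ∀ x i j, P i x → P j x → i = j) :
    Nat.card {x // ∃ i, P i x} = ∑ i, Nat.card {x // P i x} := by
  rw [← Nat.card_sigma]
  refine (Nat.card_eq_of_bijective (fun y => ⟨y.2.1, y.1, y.2.2⟩) ⟨?_, ?_⟩).symm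
  · rintro ⟨i, x, hx⟩ ⟨j, y, hy⟩ h
    obtain rfl : x = y := congrArg Subtype.val h
    obtain rfl := hP x i j hx hy
    rfl
  · rintro ⟨x, i, hx⟩
    exact ⟨⟨i, x, hx⟩, rfl⟩

section MissingValue

variable {α β : Type*}

theorem Function.Injective.range_eq_compl_singleton [Finite β] {f : α → β} (hf : Injective f)
    (hcard : Nat.card β = Nat.card α + 1) {c : β} (hc : c ∉ Set.range f) :
    Set.range f = {c}ᶜ := by
  refine Set.eq_of_subset_of_ncard_le (fun _ ⟨i, hi⟩ h => hc (h ▸ ⟨i, hi⟩)) ?_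
  rw [Set.ncard_compl, Set.ncard_singleton, Set.ncard_range_of_injective hf, hcard]
  rfl

theorem Function.Injective.eq_of_notMem_range_s15 [Finite β] {f : α → β} (hf : Injective f)
    (hcard : Nat.card β = Nat.card α + 1) {c c' : β} (hc : c ∉ Set.range f)
    (hc' : c' ∉ Set.range f) : c' = c := by
  rw [hf.range_eq_compl_singleton hcard hc] at hc'
  simpa using hc'

theorem Function.Injective.card_subtype_apply [Finite β] {f : α → β} (hf : Injective f)
    (hcard : Nat.card β = Nat.card α + 1) {c : β} (hc : c ∉ Set.range f)
    {P : β → Prop} (hPc : ¬ P c) :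
    Nat.card {i // P (f i)} = Nat.card {v // P v} := by
  have hrange := hf.range_eq_compl_singleton hcard hc
  calc Nat.card {i // P (f i)} = Nat.card {v : Set.range f // P v} :=
        Nat.card_congr ((Equiv.ofInjective f hf).subtypeEquiv fun _ => Iff.rfl)
    _ = Nat.card {v // v ∈ Set.range f ∧ P v} :=
        Nat.card_congr (Equiv.subtypeSubtypeEquivSubtypeInter _ _)
    _ = Nat.card {v // P v} := by
        congr! 3 with v
        rw [hrange]
        exact ⟨And.right, fun hv => ⟨fun h => hPc (h ▸ hv), hv⟩⟩

theorem card_injective_notMem_range [Finite α] [Finite β]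
    (hcard : Nat.card β = Nat.card α + 1) (c : β) :
    Nat.card {f : α → β // Injective f ∧ c ∉ Set.range f} = (Nat.card α).factorial := by
  have : Fintype α := Fintype.ofFinite α
  have : Fintype β := Fintype.ofFinite β
  classical
  let e : {f : α → β // Injective f ∧ c ∉ Set.range f} ≃ (α ↪ {v // v ≠ c}) :=
    { toFun := fun f => ⟨fun i => ⟨f.1 i, fun h => f.2.2 ⟨i, h⟩⟩,
        fun _ _ h => f.2.1 (congrArg Subtype.val h)⟩
      invFun := fun g => ⟨fun i => g i, fun _ _ h => g.injective (Subtype.ext h),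
        fun ⟨i, h⟩ => (g i).2 h⟩
      left_inv := fun _ => rfl
      right_inv := fun _ => rfl }
  have hcompl : Fintype.card {v // v ≠ c} = Fintype.card α := by
    rw [Fintype.card_subtype_compl, Fintype.card_subtype_eq, ← Nat.card_eq_fintype_card, hcard,
      Nat.add_sub_cancel, Nat.card_eq_fintype_card]
  rw [Nat.card_congr e, Nat.card_eq_fintype_card, Fintype.card_embedding_eq, hcompl,
    Nat.descFactorial_self, Nat.card_eq_fintype_card]

theorem card_injective_notMem_range_prod [Finite α] [Finite β]
    (hcard : Nat.card β = Nat.card α + 1) {c : β} {P : β → Prop} (hPc : ¬ P c) :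
    Nat.card {p : (α → β) × α // Injective p.1 ∧ c ∉ Set.range p.1 ∧ P (p.1 p.2)} =
      (Nat.card α).factorial * Nat.card {v // P v} := by
  have : Fintype α := Fintype.ofFinite α
  have : Fintype β := Fintype.ofFinite β
  classical
  calc _ = ∑ f : α → β, Nat.card {i // Injective f ∧ c ∉ Set.range f ∧ P (f i)} := by
        rw [Nat.card_congr (Equiv.subtypeProdEquivSigmaSubtype
          fun (f : α → β) i => Injective f ∧ c ∉ Set.range f ∧ P (f i)), Nat.card_sigma]
    _ = ∑ f : α → β, if Injective f ∧ c ∉ Set.range f then Nat.card {v // P v} else 0 := by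
        refine Finset.sum_congr rfl fun f _ => ?_
        split_ifs with hf
        · rw [← hf.1.card_subtype_apply hcard hf.2 hPc]
          simp only [hf, not_false_eq_true, true_and]
        · simp only [Nat.card_eq_zero, isEmpty_subtype]
          exact Or.inl fun i hi => hf ⟨hi.1, hi.2.1⟩
    _ = _ := by
        rw [Finset.sum_ite, sum_const_zero, add_zero, sum_const, smul_eq_mul,
          ← Fintype.card_subtype, ← Nat.card_eq_fintype_card, card_injective_notMem_range hcard]

end MissingValue

theorem Fin.sum_card_ne_zero_lt (n : ℕ) :
    ∑ c : Fin (n + 1), Nat.card {v // c ≠ 0 ∧ c < v} = n.choose 2 := by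
  have hsucc (j : Fin n) : Nat.card {v // j.succ ≠ 0 ∧ j.succ < v} = n - 1 - j := by
    simp only [ne_eq, Fin.succ_ne_zero, not_false_eq_true, true_and, Nat.card_eq_fintype_card,
      Fintype.card_subtype, Finset.filter_lt_eq_Ioi, Fin.card_Ioi, Fin.val_succ]
    omega
  have hzero : Nat.card {v : Fin (n + 1) // (0 : Fin (n + 1)) ≠ 0 ∧ 0 < v} = 0 := by simp
  rw [Fin.sum_univ_succ, hzero, zero_add, Finset.sum_congr rfl fun j _ => hsucc j,
    Fin.sum_univ_eq_sum_range (fun j => n - 1 - j), Finset.sum_range_reflect (fun j => j),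
    Finset.sum_range_id, Nat.choose_two_right]

theorem stmt_15_general (n : ℕ) :
    Nat.card {p : (Fin n → Fin (n + 1)) × Fin n //
        Function.Injective p.1 ∧
          ∃ c : Fin (n + 1), c ∉ Set.range p.1 ∧ c ≠ 0 ∧ c < p.1 p.2} =
      Nat.factorial n * n * (n - 1) / 2 := by
  have hcard : Nat.card (Fin (n + 1)) = Nat.card (Fin n) + 1 := by simp
  simp only [← exists_and_left]
  rw [Nat.card_subtype_exists (γ := (Fin n → Fin (n + 1)) × Fin n)
      (fun c p => Injective p.1 ∧ c ∉ Set.range p.1 ∧ c ≠ 0 ∧ c < p.1 p.2)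
      fun _ _ _ hc hc' => hc'.1.eq_of_notMem_range_s15 hcard hc'.2.1 hc.2.1]
  rw [Finset.sum_congr rfl fun c _ => card_injective_notMem_range_prod hcard
      (P := fun v => c ≠ 0 ∧ c < v) fun h => lt_irrefl c h.2]
  rw [← mul_sum, Fin.sum_card_ne_zero_lt, Nat.card_fin, Nat.choose_two_right,
    ← Nat.mul_div_assoc _ (Nat.even_mul_pred_self n).two_dvd, mul_assoc]

theorem stmt_15 (n : ℕ) (hn : 2 ≤ n) :
    Nat.card {p : (Fin n → Fin (n + 1)) × Fin n //
        Function.Injective p.1 ∧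
          ∃ c : Fin (n + 1), c ∉ Set.range p.1 ∧ c ≠ 0 ∧ c < p.1 p.2} =
      Nat.factorial n * n * (n - 1) / 2 :=
  stmt_15_general n
end
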